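/- Counterexample showing a relevant non-MDV covariate can generate HTEs after a non-linear transformation: let X₁ ~ N(0,1), X₂ ∈ {0,1}, mediator M(Z) = (1+Z)X₁, utility U(Z) = (1+Z)X₁ + X₂, and choice h(U) = 1[U ≥ 0]. Then the CATE of Z ∈ {0,1} on h(U) given X₂ = 1 equals Φ(-1) - Φ(-1/2) ≠ 0, while the CATE given X₂ = 0 equals 0, so HTEs exist in X₂ even though X₂ does not moderate the unique mechanism. -/
import Mathlib


open MeasureTheory ProbabilityTheory

/-- The standard normal CDF. -/
noncomputable def Phi (x : ℝ) : ℝ := ((gaussianReal 0 1) (Set.Iic x)).toReal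

/-- `CATE(X₂ = v) = Pr(2X₁ + v ≥ 0) - Pr(X₁ + v ≥ 0)` for `X₁ ~ N(0,1)`. -/
noncomputable def CATE (v : ℝ) : ℝ :=
  ((gaussianReal 0 1) {x : ℝ | 0 ≤ 2 * x + v}).toReal -
    ((gaussianReal 0 1) {x : ℝ | 0 ≤ x + v}).toReal

lemma gauss_singleton (a : ℝ) : gaussianReal 0 1 {a} = 0 :=
  gaussianReal_absolutelyContinuous 0 one_ne_zero (measure_singleton a)

lemma gauss_Ici (a : ℝ) :
    ((gaussianReal 0 1) (Set.Ici a)).toReal = 1 - Phi a := by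
  have h1 : (gaussianReal 0 1) (Set.Ici a) = 1 - (gaussianReal 0 1) (Set.Iio a) := by
    rw [← Set.compl_Iio]
    rw [measure_compl measurableSet_Iio (measure_ne_top _ _)]
    simp
  have h2 : (gaussianReal 0 1) (Set.Iio a) = (gaussianReal 0 1) (Set.Iic a) :=
    measure_congr (MeasureTheory.Iio_ae_eq_Iic' (gauss_singleton a))
  have hle : (gaussianReal 0 1) (Set.Iic a) ≤ 1 := prob_le_one
  rw [h1, h2, Phi, ENNReal.toReal_sub_of_le hle (by simp)]
  simp

theorem stmt_14 :
    CATE 1 = Phi (-1) - Phi (-(1/2)) ∧ CATE 1 ≠ 0 ∧ CATE 0 = 0 ∧ CATE 1 ≠ CATE 0 := by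
  have hs1 : {x : ℝ | 0 ≤ 2 * x + 1} = Set.Ici (-(1/2) : ℝ) := by
    ext x; simp [Set.mem_Ici]; constructor <;> intro h <;> linarith
  have hs2 : {x : ℝ | 0 ≤ x + 1} = Set.Ici (-1 : ℝ) := by
    ext x; simp [Set.mem_Ici]; constructor <;> intro h <;> linarith
  have hC1 : CATE 1 = Phi (-1) - Phi (-(1/2)) := by
    rw [CATE, hs1, hs2, gauss_Ici, gauss_Ici]; ring
  have hC0 : CATE 0 = 0 := by
    rw [CATE]
    have : {x : ℝ | 0 ≤ 2 * x + 0} = {x : ℝ | 0 ≤ x + 0} := by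
      ext x; simp
    rw [this]; ring
  have hne : CATE 1 ≠ 0 := by
    rw [hC1]
    have hPhi : Phi (-(1/2)) - Phi (-1) =
        ((gaussianReal 0 1) (Set.Ioc (-1 : ℝ) (-(1/2)))).toReal := by
      have : (gaussianReal 0 1) (Set.Iic (-(1/2) : ℝ)) =
          (gaussianReal 0 1) (Set.Iic (-1 : ℝ)) +
          (gaussianReal 0 1) (Set.Ioc (-1 : ℝ) (-(1/2))) := by
        rw [← measure_union _ measurableSet_Ioc]
        · rw [Set.Iic_union_Ioc_eq_Iic (by norm_num)]
        · exact Set.Iic_disjoint_Ioc le_rfl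
      rw [Phi, Phi, this, ENNReal.toReal_add (measure_ne_top _ _) (measure_ne_top _ _)]
      ring
    have hpos : (gaussianReal 0 1) (Set.Ioc (-1 : ℝ) (-(1/2))) ≠ 0 := by
      intro h
      have := gaussianReal_absolutelyContinuous' 0 one_ne_zero h
      rw [Real.volume_Ioc] at this
      simp at this
      norm_num at this
    have : 0 < Phi (-(1/2)) - Phi (-1) := by
      rw [hPhi]
      exact ENNReal.toReal_pos hpos (measure_ne_top _ _)
    linarith
  exact ⟨hC1, hne, hC0, by rw [hC0]; exact hne⟩
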